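/- arXiv:1108.1075 — 6 statements merged into one kernel-verified Lean document; each statement's English description precedes it below -/
import Mathlib

section
/- Let F be an exponential field satisfying the Schanuel property. If k₁,…,kₙ ∈ ker(F) are linearly independent over ℚ, then k₁,…,kₙ are algebraically independent over ℚ. -/
noncomputable section
open scoped Pointwise
open Cardinal

namespace Paper

variable (F : Type*) [Field F] [CharZero F]

/-- `td F X Y` : the transcendence degree of the field `ℚ(X ∪ Y)` over `ℚ(X)`,
computed as the supremum of cardinalities of subsets of `Y` which are algebraically
independent over the subfield generated by `X`. -/
def td (X Y : Set F) : Cardinal :=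
  ⨆ p : {s : Set F // s ⊆ Y ∧
      AlgebraicIndependent (IntermediateField.adjoin ℚ X) (fun y : s => (y : F))},
    Cardinal.mk p.1

/-- Natural-number valued relative transcendence degree. -/
def tdN (X Y : Set F) : ℕ := (td F X Y).toNat

/-- `ldim F X Y` : the dimension of the quotient of the `ℚ`-span of `X ∪ Y`
by the `ℚ`-span of `X`, i.e. `ldim_ℚ(Y/X)`. -/
def ldim (X Y : Set F) : Cardinal :=
  Module.rank ℚ (Submodule.span ℚ ((Submodule.span ℚ X).mkQ '' Y))

/-- Natural-number valued relative linear dimension. -/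
def ldimN (X Y : Set F) : ℕ := (ldim F X Y).toNat

/-- The Schanuel property for a total exponential map:
`td(x̄ ∪ exp(x̄)/∅) ≥ ldim_ℚ(x̄/∅)` for every finite tuple `x̄`. -/
def Schanuel (exp : F → F) : Prop :=
  ∀ s : Finset F, ldim F ∅ ↑s ≤ td F ∅ (↑s ∪ exp '' ↑s)

/-- A partial E-field structure on a field `F` of characteristic zero: a `ℚ`-subspace
`D`, and an exponential map which is a homomorphism from `D` to `Fˣ`. -/
structure PEField (F : Type*) [Field F] [CharZero F] where
  D : Submodule ℚ F
  exp : F → F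
  exp_ne_zero : ∀ a ∈ D, exp a ≠ 0
  exp_add : ∀ a ∈ D, ∀ b ∈ D, exp (a + b) = exp a * exp b

namespace PEField

variable {F} (E : PEField F)

/-- The kernel of the exponential map, as a set. -/
def kerSet : Set F := {a | a ∈ E.D ∧ E.exp a = 1}

lemma exp_zero : E.exp 0 = 1 := by
  have h0 : (0 : F) ∈ E.D := E.D.zero_mem
  have h := E.exp_add 0 h0 0 h0
  rw [add_zero] at h
  have hne := E.exp_ne_zero 0 h0
  have h' : E.exp 0 * 1 = E.exp 0 * E.exp 0 := by rw [mul_one]; exact h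
  exact (mul_left_cancel₀ hne h').symm

/-- The kernel of the exponential map, as an additive subgroup of `F`. -/
def ker : AddSubgroup F where
  carrier := {a | a ∈ E.D ∧ E.exp a = 1}
  zero_mem' := ⟨E.D.zero_mem, E.exp_zero⟩
  add_mem' := by
    rintro a b ⟨haD, ha⟩ ⟨hbD, hb⟩
    exact ⟨E.D.add_mem haD hbD, by rw [E.exp_add a haD b hbD, ha, hb, mul_one]⟩
  neg_mem' := by
    rintro a ⟨haD, ha⟩
    refine ⟨E.D.neg_mem haD, ?_⟩
    have h := E.exp_add a haD (-a) (E.D.neg_mem haD)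
    rw [add_neg_cancel, E.exp_zero, ha, one_mul] at h
    exact h.symm

/-- The image `I(F)` of the exponential map. -/
def img : Set F := E.exp '' (E.D : Set F)

/-- `F` has full kernel iff every root of unity lies in the image of `exp`. -/
def FullKernel : Prop :=
  ∀ x : F, (∃ m : ℕ, 0 < m ∧ x ^ m = 1) → x ∈ E.exp '' (E.D : Set F)

/-- `F` has very full kernel iff every coherent system of roots of unity is of the
form `(exp (a/m))_{m ≥ 1}` for some `a ∈ D(F)`. -/
def VeryFullKernel : Prop :=
  ∀ c : ℕ → F, c 1 = 1 → (∀ r m : ℕ, 0 < r → 0 < m → c (r * m) ^ r = c m) →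
    ∃ a ∈ E.D, ∀ m : ℕ, 0 < m → E.exp (a / (m : F)) = c m

end PEField

/-- A partial E-subfield of a partial E-field: a subfield together with a `ℚ`-subspace
of `D(F)` contained in it, closed under the exponential map. -/
structure ESub {F : Type*} [Field F] [CharZero F] (E : PEField F) where
  carrier : Subfield F
  dom : Submodule ℚ F
  dom_le : dom ≤ E.D
  dom_sub : (dom : Set F) ⊆ (carrier : Set F)
  exp_mem : ∀ a ∈ dom, E.exp a ∈ carrier

namespace ESub

variable {F : Type*} [Field F] [CharZero F] {E : PEField F}

/-- The kernel of a partial E-subfield. -/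
def kerSet (A : ESub E) : Set F := {a | a ∈ A.dom ∧ E.exp a = 1}

/-- Inclusion (extension) of partial E-subfields. -/
def le (A B : ESub E) : Prop := A.carrier ≤ B.carrier ∧ A.dom ≤ B.dom

end ESub

/-- The whole of a partial E-field, viewed as a partial E-subfield of itself. -/
def PEField.top {F : Type*} [Field F] [CharZero F] (E : PEField F) : ESub E where
  carrier := ⊤
  dom := E.D
  dom_le := le_rfl
  dom_sub := fun x _ => Subfield.mem_top x
  exp_mem := fun a _ => Subfield.mem_top _

variable {F}

/-- The relative predimension function `Δ_B(x̄/A)` for an extension `A ⊆ B` of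
partial E-(sub)fields:
`td(x̄ ∪ exp(x̄ ∩ D(B)) / A ∪ ker(B)) − ldim_ℚ(x̄ ∩ D(B) / D(A) ∪ ker(B))`. -/
def Delta (E : PEField F) (A B : ESub E) (s : Finset F) : ℤ :=
  (tdN F ((A.carrier : Set F) ∪ B.kerSet) (↑s ∪ E.exp '' (↑s ∩ (B.dom : Set F))) : ℤ) -
    (ldimN F ((A.dom : Set F) ∪ B.kerSet) (↑s ∩ (B.dom : Set F)) : ℤ)

/-- The extension `A ⊆ B` of partial E-(sub)fields is semi-strong: `Δ_B(x̄/A) ≥ 0`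
for all tuples `x̄` from `B`, and `A` is algebraically free from `ker(B)` over `ker(A)`. -/
def SemiStrong (E : PEField F) (A B : ESub E) : Prop :=
  (∀ s : Finset F, ↑s ⊆ (B.carrier : Set F) → 0 ≤ Delta E A B s) ∧
  (∀ t : Finset F, ↑t ⊆ (A.carrier : Set F) →
    tdN F (A.kerSet ∪ B.kerSet) ↑t = tdN F A.kerSet ↑t)

/-- The predimension `δ(ā/X)` of a finite tuple over a subset `X` of a partial E-field:
`td(ā ∪ exp(ā ∩ D) / X ∪ exp(X ∩ D)) − ldim_ℚ(ā/X)`. -/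
def deltaSet (E : PEField F) (X : Set F) (s : Finset F) : ℤ :=
  (tdN F (X ∪ E.exp '' (X ∩ (E.D : Set F))) (↑s ∪ E.exp '' (↑s ∩ (E.D : Set F))) : ℤ) -
    (ldimN F X ↑s : ℤ)

lemma span_le_subfield {K : Subfield F} {S : Set F} (h : S ⊆ (K : Set F)) :
    ((Submodule.span ℚ S : Submodule ℚ F) : Set F) ⊆ (K : Set F) := by
  intro x hx
  induction hx using Submodule.span_induction with
  | mem x hx => exact h hx
  | zero => exact zero_mem K
  | add x y _ _ hx hy => exact add_mem hx hy
  | smul q x _ hx => rw [Rat.smul_def]; exact mul_mem (SubfieldClass.ratCast_mem K q) hx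

/-- The partial E-subfield `⟨X⟩_F` generated by a subset `X`: its domain is
`span_ℚ(X ∩ D(F))` and its field is generated by `X ∪ exp(span_ℚ(X ∩ D(F)))`. -/
def genSub (E : PEField F) (X : Set F) : ESub E where
  carrier := Subfield.closure
    (X ∪ E.exp '' ((Submodule.span ℚ (X ∩ (E.D : Set F)) : Submodule ℚ F) : Set F))
  dom := Submodule.span ℚ (X ∩ (E.D : Set F))
  dom_le := Submodule.span_le.mpr Set.inter_subset_right
  dom_sub := by
    refine span_le_subfield ?_
    intro x hx
    exact Subfield.subset_closure (Set.mem_union_left _ hx.1)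
  exp_mem := fun a ha => Subfield.subset_closure (Set.mem_union_right _ ⟨a, ha, rfl⟩)

/-- `Δ_F(x̄/B)` for an arbitrary subset `B` : the predimension of `x̄` over the partial
E-subfield `⟨ker(F) ∪ B⟩_F`. -/
def DeltaOver (E : PEField F) (B : Set F) (s : Finset F) : ℤ :=
  Delta E (genSub E (E.kerSet ∪ B)) E.top s

/-- The natural map `Fˣ → ℚ ⊗[ℤ] Additive Fˣ`. -/
def toQV : Fˣ → TensorProduct ℤ ℚ (Additive Fˣ) :=
  fun u => TensorProduct.tmul ℤ (1 : ℚ) (Additive.ofMul u)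

/-- The multiplicative rank `mrk(B/H)` : the dimension of the `ℚ`-span of the image of
`B` in `ℚ ⊗_ℤ Fˣ`, modulo the `ℚ`-span of the image of `H`. -/
def mrk (H B : Set Fˣ) : ℕ :=
  (Module.rank ℚ (Submodule.span ℚ
    ((Submodule.span ℚ (toQV '' H)).mkQ '' (toQV '' B)))).toNat

/-- The set of units lying in a given subset of `F`. -/
def unitsOf (S : Set F) : Set Fˣ := {u : Fˣ | (u : F) ∈ S}

/-- The partial E-subfield with underlying set `X` and domain `DX` is semi-strong in
the partial E-field `E`. -/
def SemiStrongSet (E : PEField F) (X DX : Set F) : Prop :=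
  (∀ s : Finset F,
    0 ≤ (tdN F (X ∪ E.kerSet) (↑s ∪ E.exp '' (↑s ∩ (E.D : Set F))) : ℤ) -
        (ldimN F (DX ∪ E.kerSet) (↑s ∩ (E.D : Set F)) : ℤ)) ∧
  (∀ t : Finset F, ↑t ⊆ X →
    tdN F ({a ∈ DX | E.exp a = 1} ∪ E.kerSet) ↑t = tdN F {a ∈ DX | E.exp a = 1} ↑t)

/-- An ELA-field: an algebraically closed field of characteristic zero together with a
total exponential map which is surjective onto the multiplicative group. -/
structure ELAField (K : Type*) [Field K] [CharZero K] where
  exp : K → K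
  exp_ne_zero : ∀ x, exp x ≠ 0
  exp_add : ∀ x y, exp (x + y) = exp x * exp y
  alg_closed : IsAlgClosed K
  exp_surj : ∀ y : K, y ≠ 0 → ∃ x, exp x = y

/-- An ELA-field regarded as a (total) partial E-field. -/
def ELAField.toPE {K : Type*} [Field K] [CharZero K] (L : ELAField K) : PEField K :=
  ⟨⊤, L.exp, fun a _ => L.exp_ne_zero a, fun a _ b _ => L.exp_add a b⟩

/-- `S` is an ELA-closed subfield of the ELA-field `K`: it is (the underlying set of) a
subfield, closed under `exp`, contains an `exp`-preimage of each of its nonzero elements,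
and is relatively algebraically closed in `K`. -/
def IsELASub {K : Type*} [Field K] [CharZero K] (L : ELAField K) (S : Set K) : Prop :=
  (∃ Sf : Subfield K, (Sf : Set K) = S) ∧
  (∀ x ∈ S, L.exp x ∈ S) ∧
  (∀ y ∈ S, y ≠ 0 → ∃ x ∈ S, L.exp x = y) ∧
  (∀ x : K, ∀ p : Polynomial K, p ≠ 0 → (∀ i, p.coeff i ∈ S) →
    Polynomial.eval x p = 0 → x ∈ S)

/-- `S = ⟨A⟩^{ELA}_K` : `S` is the smallest ELA-closed subfield of `K` containing `A`. -/
def IsELAGen {K : Type*} [Field K] [CharZero K] (L : ELAField K) (A S : Set K) : Prop :=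
  IsELASub L S ∧ A ⊆ S ∧ ∀ T : Set K, IsELASub L T → A ⊆ T → S ⊆ T


/-- In an exponential field with the Schanuel property, ℚ-linearly
independent kernel elements are algebraically independent over ℚ. -/
theorem schanuel_kernel_algebraically_independent
    {F : Type*} [Field F] [CharZero F] (exp : F → F)
    (hexp_ne : ∀ x : F, exp x ≠ 0)
    (hexp_add : ∀ x y : F, exp (x + y) = exp x * exp y)
    (hSch : Schanuel F exp)
    {n : ℕ} (k : Fin n → F)
    (hker : ∀ i, exp (k i) = 1)
    (hlin : LinearIndependent ℚ k) :
    AlgebraicIndependent ℚ k := by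
  rcases Nat.eq_zero_or_pos n with hn | hn
  · haveI : IsEmpty (Fin n) := by subst hn; infer_instance
    exact algebraicIndependent_empty_type
  classical
  by_contra hcon
  set s : Finset F := Finset.univ.image k with hs_def
  have hs : (↑s : Set F) = Set.range k := by
    simp [hs_def]
  have hcard : s.card = n := by
    rw [hs_def, Finset.card_image_of_injective _ hlin.injective, Finset.card_univ,
      Fintype.card_fin]
  -- compute ldim
  set q := (Submodule.span ℚ (∅ : Set F)).mkQ with hq_def
  have hkerq : LinearMap.ker q = ⊥ := by
    rw [hq_def, Submodule.ker_mkQ, Submodule.span_empty]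
  have hlin' : LinearIndependent ℚ (q ∘ k) := hlin.map' q hkerq
  have hldim : ldim F ∅ ↑s = (n : Cardinal) := by
    unfold ldim
    rw [hs, ← Set.range_comp]
    rw [rank_span hlin']
    simpa using Cardinal.mk_range_eq_of_injective hlin'.injective
  -- bound td
  haveI : Nonempty {t : Set F // t ⊆ (↑s ∪ exp '' ↑s) ∧
      AlgebraicIndependent (IntermediateField.adjoin ℚ (∅ : Set F))
        (fun y : t => (y : F))} := by
    refine ⟨⟨∅, Set.empty_subset _, ?_⟩⟩
    exact algebraicIndependent_empty
  have htd : td F ∅ (↑s ∪ exp '' ↑s) ≤ ((n - 1 : ℕ) : Cardinal) := by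
    refine ciSup_le' ?_
    rintro ⟨t, htY, hind⟩
    have h1 : (1 : F) ∉ t := by
      intro h1
      have := hind.transcendental ⟨1, h1⟩
      exact this isAlgebraic_one
    have hts : t ⊆ (↑s : Set F) := by
      intro x hx
      rcases htY hx with h | h
      · exact h
      · rcases h with ⟨y, hy, rfl⟩
        rw [hs] at hy
        rcases hy with ⟨i, rfl⟩
        exact absurd (hker i ▸ hx) h1
    have htne : t ≠ (↑s : Set F) := by
      rintro rfl
      apply hcon
      have h2 : AlgebraicIndependent ℚ (fun y : (↑s : Set F) => (y : F)) :=
        hind.restrictScalars ((algebraMap ℚ _).injective)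
      rw [hs] at h2
      exact (algebraicIndependent_subtype_range hlin.injective).mp h2
    have htfin : t.Finite := (s.finite_toSet).subset hts
    obtain ⟨t', rfl⟩ : ∃ t' : Finset F, (↑t' : Set F) = t :=
      ⟨htfin.toFinset, htfin.coe_toFinset⟩
    have hlt : t'.card < n := by
      rw [← hcard]
      exact Finset.card_lt_card (lt_of_le_of_ne (Finset.coe_subset.mp hts)
        (fun h => htne (by rw [h])))
    calc Cardinal.mk (↑t' : Set F) = (t'.card : Cardinal) := Cardinal.mk_coe_finset
      _ ≤ ((n - 1 : ℕ) : Cardinal) := by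
          exact_mod_cast Nat.le_sub_one_of_lt hlt
  have hSch' := hSch s
  rw [hldim] at hSch'
  have := hSch'.trans htd
  have hle : n ≤ n - 1 := by exact_mod_cast this
  omega


end Paper
end
end

section
/- Let F be an exponential field, let t ∈ ker(F) with t ≠ 0, and let r ∈ F be transcendental over ℚ and such that r·x ∈ ker(F) for every x ∈ ker(F). Then for every n ≥ 1 the tuple (t, rt, r²t, …, r^{n−1}t) consists of elements of ker(F), is linearly independent over ℚ, and satisfies td({t, rt, …, r^{n−1}t} ∪ exp({t, rt, …, r^{n−1}t})/∅) ≤ 2. In particular, for n ≥ 3 the Schanuel property fails in F. -/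
noncomputable section
open scoped Pointwise
open Cardinal

namespace Paper

variable (F : Type*) [Field F] [CharZero F]

variable {F}

lemma aux_li {F : Type*} [Field F] [CharZero F] {t r : F} (ht0 : t ≠ 0)
    (hr : Transcendental ℚ r) (n : ℕ) :
    LinearIndependent ℚ (fun i : Fin n => r ^ (i : ℕ) * t) := by
  rw [Fintype.linearIndependent_iff]
  intro g hg i
  have hsum : (∑ j : Fin n, (g j : F) * r ^ (j : ℕ)) * t = 0 := by
    rw [Finset.sum_mul]
    simpa [Algebra.smul_def, mul_assoc] using hg
  have h2 : ∑ j : Fin n, (g j : F) * r ^ (j : ℕ) = 0 :=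
    (mul_eq_zero.mp hsum).resolve_right ht0
  set p : Polynomial ℚ := ∑ j : Fin n, Polynomial.C (g j) * Polynomial.X ^ (j : ℕ) with hp
  have hpz : Polynomial.aeval r p = 0 := by
    simp only [hp, map_sum, map_mul, Polynomial.aeval_C, map_pow, Polynomial.aeval_X]
    simpa using h2
  have hp0 : p = 0 := transcendental_iff.mp hr p hpz
  have hco : p.coeff (i : ℕ) = g i := by
    rw [hp, Polynomial.finset_sum_coeff]
    rw [Finset.sum_eq_single i]
    · simp
    · intro j _ hji
      simp only [Polynomial.coeff_C_mul, Polynomial.coeff_X_pow]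
      rw [if_neg (fun h => hji (Fin.ext h.symm))]
      simp
    · simp
  rw [hp0] at hco
  simpa using hco.symm

lemma aux_pow_ne {F : Type*} [Field F] [CharZero F] {t r : F} (ht0 : t ≠ 0)
    (hr : Transcendental ℚ r) {a b : ℕ} (hab : a < b) : r ^ a * t ≠ r ^ b * t := by
  intro heq
  have hr0 : r ≠ 0 := fun h => hr (by rw [h]; exact isAlgebraic_zero)
  have h1 : r ^ a * t ≠ 0 := mul_ne_zero (pow_ne_zero _ hr0) ht0
  have hb : b = a + (b - a) := by omega
  have hmm : r ^ a * t * 1 = r ^ a * t * r ^ (b - a) :=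
    calc r ^ a * t * 1 = r ^ b * t := by rw [mul_one, heq]
      _ = r ^ (a + (b - a)) * t := by rw [← hb]
      _ = r ^ a * t * r ^ (b - a) := by rw [pow_add]; ring
  have h2 : (1 : F) = r ^ (b - a) := mul_left_cancel₀ h1 hmm
  have hz : Polynomial.aeval r (Polynomial.X ^ (b - a) - 1 : Polynomial ℚ) = 0 := by
    simp [← h2]
  have hne : (Polynomial.X ^ (b - a) - 1 : Polynomial ℚ) ≠ 0 := by
    have h0 : 0 < b - a := by omega
    simpa using Polynomial.X_pow_sub_C_ne_zero h0 (1 : ℚ)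
  exact hr ⟨_, hne, hz⟩

lemma aux_identity {F : Type*} [Field F] (t r : F) (a d e : ℕ) :
    (r ^ a * t) ^ (e + 1) * (r ^ (a + d + 1 + e + 1) * t) ^ (d + 1) =
      (r ^ (a + d + 1) * t) ^ (d + e + 2) := by
  rw [mul_pow, mul_pow, mul_pow, ← pow_mul, ← pow_mul, ← pow_mul, mul_mul_mul_comm,
    ← pow_add, ← pow_add]
  rw [show a * (e + 1) + (a + d + 1 + e + 1) * (d + 1) = (a + d + 1) * (d + e + 2) from by
    ring]
  rw [show e + 1 + (d + 1) = d + e + 2 from by omega]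

lemma aux_identity' {F : Type*} [Field F] (t r : F) {α β γ : ℕ} (h1 : α < β)
    (h2 : β < γ) :
    (r ^ α * t) ^ (γ - β) * (r ^ γ * t) ^ (β - α) = (r ^ β * t) ^ (γ - α) := by
  obtain ⟨d, rfl⟩ : ∃ d, β = α + d + 1 := ⟨β - α - 1, by omega⟩
  obtain ⟨e, rfl⟩ : ∃ e, γ = α + d + 1 + e + 1 := ⟨γ - (α + d + 1) - 1, by omega⟩
  rw [show α + d + 1 + e + 1 - (α + d + 1) = e + 1 from by omega,
    show α + d + 1 - α = d + 1 from by omega,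
    show α + d + 1 + e + 1 - α = d + e + 2 from by omega]
  exact aux_identity t r α d e

set_option maxHeartbeats 1000000 in
set_option synthInstance.maxHeartbeats 400000 in
lemma aux_td_le_two {F : Type*} [Field F] [CharZero F] {t r : F} (ht0 : t ≠ 0)
    (hr : Transcendental ℚ r) (Y : Set F)
    (hY : Y ⊆ {x | ∃ m : ℕ, x = r ^ m * t} ∪ {1}) :
    td F ∅ Y ≤ 2 := by
  classical
  refine ciSup_le' ?_
  rintro ⟨s, hsY, hind⟩
  by_contra hgt
  push_neg at hgt
  have h3 : (3 : Cardinal) ≤ Cardinal.mk s := by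
    have h2' : ((2 : ℕ) : Cardinal) < Cardinal.mk s := by exact_mod_cast hgt
    have := Order.succ_le_of_lt h2'
    rw [← Cardinal.nat_succ] at this
    exact_mod_cast this
  obtain ⟨x, y, hxy⟩ := Cardinal.two_le_iff.mp (le_trans (by norm_num) h3)
  obtain ⟨z, hzx, hzy⟩ := Cardinal.three_le h3 x y
  have hinj := algebraicIndependent_iff_injective_aeval.mp hind
  have hne1 : ∀ u : s, (u : F) ≠ 1 := by
    intro u hu
    have hq0 : (MvPolynomial.X u - 1 :
        MvPolynomial s ↥(IntermediateField.adjoin ℚ (∅ : Set F))) = 0 := by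
      apply hinj
      simp [hu]
    have := congrArg (MvPolynomial.eval (fun _ : s =>
      (0 : ↥(IntermediateField.adjoin ℚ (∅ : Set F))))) hq0
    simp at this
  have hform : ∀ u : s, ∃ m : ℕ, (u : F) = r ^ m * t := by
    intro u
    rcases hY (hsY u.2) with h | h
    · exact h
    · exact absurd h (hne1 u)
  obtain ⟨a, ha⟩ := hform x
  obtain ⟨b, hb⟩ := hform y
  obtain ⟨c, hc⟩ := hform z
  have main : ∀ (u v w : s) (α β γ : ℕ), (u : F) = r ^ α * t → (v : F) = r ^ β * t →
      (w : F) = r ^ γ * t → α < β → β < γ → False := by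
    intro u v w α β γ hu hv hw h1 h2
    have huv : u ≠ v := fun h =>
      aux_pow_ne ht0 hr h1 (by rw [← hu, ← hv, h])
    have hwv : w ≠ v := fun h =>
      aux_pow_ne ht0 hr h2 (by rw [← hv, ← hw, h])
    set q : MvPolynomial s ↥(IntermediateField.adjoin ℚ (∅ : Set F)) :=
      MvPolynomial.X u ^ (γ - β) * MvPolynomial.X w ^ (β - α) -
        MvPolynomial.X v ^ (γ - α) with hqdef
    have hq0 : q = 0 := by
      apply hinj
      rw [map_zero]
      simp only [hqdef, map_sub, map_mul, map_pow, MvPolynomial.aeval_X]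
      rw [hu, hv, hw, sub_eq_zero]
      exact aux_identity' t r h1 h2
    have hev := congrArg (MvPolynomial.eval (fun y : s =>
      if y = v then (1 : ↥(IntermediateField.adjoin ℚ (∅ : Set F))) else 0)) hq0
    simp only [hqdef, map_sub, map_mul, map_pow, MvPolynomial.eval_X, map_zero] at hev
    simp [huv, hwv, zero_pow (Nat.sub_ne_zero_of_lt h2)] at hev
  have hab : a ≠ b := fun h => hxy (Subtype.ext (by rw [ha, hb, h]))
  have hbc : b ≠ c := fun h =>
    hzy (Subtype.ext (show ((z : s) : F) = (y : F) by rw [hb, hc, h]))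
  have hac : a ≠ c := fun h =>
    hzx (Subtype.ext (show ((z : s) : F) = (x : F) by rw [ha, hc, h]))
  rcases Nat.lt_trichotomy a b with h1 | h1 | h1
  · rcases Nat.lt_trichotomy c a with h2 | h2 | h2
    · exact main z x y c a b hc ha hb h2 h1
    · exact hac h2.symm
    · rcases Nat.lt_trichotomy c b with h3 | h3 | h3
      · exact main x z y a c b ha hc hb h2 h3
      · exact hbc h3.symm
      · exact main x y z a b c ha hb hc h1 h3
  · exact hab h1
  · rcases Nat.lt_trichotomy c b with h2 | h2 | h2
    · exact main z y x c b a hc hb ha h2 h1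
    · exact hbc h2.symm
    · rcases Nat.lt_trichotomy c a with h3 | h3 | h3
      · exact main y z x b c a hb hc ha h2 h3
      · exact hac h3.symm
      · exact main y x z b a c hb ha hc h1 h3

/-- if `t` is a nonzero kernel element and `r` is a transcendental
multiplicative stabilizer of the kernel, then `t, rt, …, r^{n-1}t` are ℚ-linearly
independent kernel elements of transcendence degree (together with their
exponentials) at most 2; in particular for `n ≥ 3` the Schanuel property fails. -/
theorem kernel_stabilizer_schanuel_failure
    {F : Type*} [Field F] [CharZero F] (exp : F → F)
    (hexp_ne : ∀ x : F, exp x ≠ 0)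
    (hexp_add : ∀ x y : F, exp (x + y) = exp x * exp y)
    (t r : F) (ht : exp t = 1) (ht0 : t ≠ 0)
    (hr : Transcendental ℚ r)
    (hstab : ∀ x : F, exp x = 1 → exp (r * x) = 1)
    (n : ℕ) (hn : 1 ≤ n) :
    (∀ i : Fin n, exp (r ^ (i : ℕ) * t) = 1) ∧
    LinearIndependent ℚ (fun i : Fin n => r ^ (i : ℕ) * t) ∧
    td F ∅ ((Set.range fun i : Fin n => r ^ (i : ℕ) * t) ∪
      exp '' (Set.range fun i : Fin n => r ^ (i : ℕ) * t)) ≤ 2 ∧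
    (3 ≤ n → ¬ Schanuel F exp) := by
  classical
  have hker : ∀ m : ℕ, exp (r ^ m * t) = 1 := by
    intro m
    induction m with
    | zero => simpa using ht
    | succ k ih =>
      have : r ^ (k + 1) * t = r * (r ^ k * t) := by ring
      rw [this]
      exact hstab _ ih
  have hli : ∀ m : ℕ, LinearIndependent ℚ (fun i : Fin m => r ^ (i : ℕ) * t) :=
    fun m => aux_li ht0 hr m
  have htd : ∀ m : ℕ, td F ∅ ((Set.range fun i : Fin m => r ^ (i : ℕ) * t) ∪
      exp '' (Set.range fun i : Fin m => r ^ (i : ℕ) * t)) ≤ 2 := by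
    intro m
    refine aux_td_le_two ht0 hr _ ?_
    rintro x (⟨i, rfl⟩ | ⟨w, ⟨i, rfl⟩, rfl⟩)
    · exact Or.inl ⟨i, rfl⟩
    · exact Or.inr (hker _)
  refine ⟨fun i => hker i, hli n, htd n, ?_⟩
  intro _ hS
  set v : Fin 3 → F := fun i => r ^ (i : ℕ) * t with hv
  set s : Finset F := Finset.image v Finset.univ with hs
  have hcoe : (↑s : Set F) = Set.range v := by
    rw [hs, Finset.coe_image, Finset.coe_univ, Set.image_univ]
  have hS' := hS s
  rw [hcoe] at hS'
  have hld : (3 : Cardinal) ≤ ldim F ∅ (Set.range v) := by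
    rw [ldim, Submodule.span_empty]
    set f := (⊥ : Submodule ℚ F).mkQ with hf
    have hker' : LinearMap.ker f = ⊥ := Submodule.ker_mkQ ⊥
    have hli3 : LinearIndependent ℚ (f ∘ v) := (hli 3).map' f hker'
    have him : f '' Set.range v = Set.range (f ∘ v) := (Set.range_comp f v).symm
    have h3' : Cardinal.mk (Set.range (⇑f ∘ v)) = 3 := by
      have h := Cardinal.mk_range_eq_of_injective hli3.injective
      simpa using h
    rw [him, rank_span hli3, h3']
  have h32 : (3 : Cardinal) ≤ 2 := le_trans hld (le_trans hS' (htd 3))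
  norm_num at h32


end Paper
end
end

section
/- Let F be a partial E-field whose underlying field contains a primitive m-th root of unity for every m ≥ 1 (for instance, an algebraically closed field of characteristic zero). Then F has full kernel if and only if for every m ≥ 1 the quotient group ker(F)/m·ker(F) is cyclic of order m. -/
noncomputable section
open scoped Pointwise
open Cardinal

namespace Paper

variable (F : Type*) [Field F] [CharZero F]

variable {F}

/-! For `m ≥ 1` the map `a ↦ exp (a / m)` is a homomorphism from `ker(F)` to the group `μ_m` of
`m`-th roots of unity with kernel `m • ker(F)`, so `ker(F) / m • ker(F)` embeds into `μ_m`. That group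
is cyclic, and of order `m` because `F` contains a primitive `m`-th root of unity; hence the quotient
is always cyclic, and it has order `m` exactly when the embedding is onto. Surjectivity for
every `m` is full kernel: if `exp b` is an `m`-th root of unity then `m * b ∈ ker(F)` and
`exp b = exp (m * b / m)`. -/

theorem _root_.AddMonoidHom.card_quotient_ker_eq_iff_surjective {G H : Type*} [AddGroup G]
    [AddGroup H] [Finite H] (f : G →+ H) :
    Nat.card (G ⧸ f.ker) = Nat.card H ↔ Function.Surjective f := by
  rw [← AddSubgroup.index_eq_card, AddSubgroup.index_ker, AddSubgroup.card_eq_iff_eq_top,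
    AddMonoidHom.range_eq_top]

theorem _root_.AddMonoidHom.isAddCyclic_quotient_ker {G H : Type*} [AddGroup G] [AddGroup H]
    [IsAddCyclic H] (f : G →+ H) : IsAddCyclic (G ⧸ f.ker) :=
  isAddCyclic_of_injective (QuotientAddGroup.kerLift f) (QuotientAddGroup.kerLift_injective f)

namespace PEField

variable {F : Type*} [Field F] [CharZero F] (E : PEField F)

lemma div_natCast_mem {a : F} (ha : a ∈ E.D) (m : ℕ) : a / m ∈ E.D := by
  simpa [Rat.smul_def, div_eq_inv_mul] using E.D.smul_mem (m : ℚ)⁻¹ ha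

lemma natCast_mul_mem {a : F} (ha : a ∈ E.D) (m : ℕ) : m * a ∈ E.D := by
  simpa [Rat.smul_def] using E.D.smul_mem (m : ℚ) ha

lemma exp_natCast_mul {b : F} (hb : b ∈ E.D) (n : ℕ) : E.exp (n * b) = E.exp b ^ n := by
  induction n with
  | zero => simpa using E.exp_zero
  | succ n ih =>
    rw [Nat.cast_succ, add_one_mul, E.exp_add _ (E.natCast_mul_mem hb n) b hb, ih, pow_succ]

lemma exp_div_natCast_pow {a : F} (ha : a ∈ E.ker) (m : ℕ) : E.exp (a / m) ^ m = 1 := by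
  rcases eq_or_ne m 0 with rfl | hm
  · simp
  rw [← E.exp_natCast_mul (E.div_natCast_mem ha.1 m), mul_div_cancel₀ _ (Nat.cast_ne_zero.2 hm)]
  exact ha.2

def expDivRoot (m : ℕ) : E.ker →+ Additive (rootsOfUnity m F) where
  toFun a := .ofMul ⟨Units.mk0 (E.exp (a / m)) (E.exp_ne_zero _ (E.div_natCast_mem a.2.1 m)),
    (mem_rootsOfUnity' m _).2 (E.exp_div_natCast_pow a.2 m)⟩
  map_zero' := by ext; simp [E.exp_zero]
  map_add' a b := by
    ext
    simp [add_div, E.exp_add _ (E.div_natCast_mem a.2.1 m) _ (E.div_natCast_mem b.2.1 m)]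

lemma expDivRoot_eq_ofMul_iff {m : ℕ} (a : E.ker) (ζ : rootsOfUnity m F) :
    E.expDivRoot m a = .ofMul ζ ↔ E.exp (a / m) = ((ζ : Fˣ) : F) := by
  rw [← Additive.toMul.injective.eq_iff, Subtype.ext_iff, Units.ext_iff]
  rfl

lemma ker_expDivRoot {m : ℕ} (hm : m ≠ 0) : (E.expDivRoot m).ker = m • ⊤ := by
  ext a
  have hm' : (m : F) ≠ 0 := Nat.cast_ne_zero.2 hm
  rw [AddMonoidHom.mem_ker, ← ofMul_one, expDivRoot_eq_ofMul_iff,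
    AddSubgroup.mem_smul_pointwise_iff_exists]
  constructor
  · intro h1
    refine ⟨⟨a / m, E.div_natCast_mem a.2.1 m, h1⟩, AddSubgroup.mem_top _, ?_⟩
    ext
    simp [nsmul_eq_mul, mul_div_cancel₀ _ hm']
  · rintro ⟨b, -, rfl⟩
    simpa [nsmul_eq_mul, mul_div_cancel_left₀ _ hm'] using b.2.2

lemma fullKernel_iff_forall_surjective_expDivRoot :
    E.FullKernel ↔ ∀ m : ℕ, 0 < m → Function.Surjective (E.expDivRoot m) := by
  constructor
  · intro hfull m hm ζ
    obtain ⟨ζ, rfl⟩ := Additive.ofMul.surjective ζ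
    have hζ : ((ζ : Fˣ) : F) ^ m = 1 := by
      simpa using congrArg Units.val ((mem_rootsOfUnity m _).1 ζ.2)
    obtain ⟨b, hb, hbζ⟩ := hfull _ ⟨m, hm, hζ⟩
    have hmb : m * b ∈ E.ker := ⟨E.natCast_mul_mem hb m, by rw [E.exp_natCast_mul hb, hbζ, hζ]⟩
    refine ⟨⟨m * b, hmb⟩, (E.expDivRoot_eq_ofMul_iff _ _).2 ?_⟩
    rwa [mul_div_cancel_left₀ _ (Nat.cast_ne_zero.2 hm.ne')]
  · rintro hsurj x ⟨m, hm, hx⟩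
    have hx0 : x ≠ 0 := by rintro rfl; simp [hm.ne'] at hx
    obtain ⟨a, ha⟩ := hsurj m hm (.ofMul ⟨Units.mk0 x hx0, (mem_rootsOfUnity' m _).2 hx⟩)
    exact ⟨a / m, E.div_natCast_mem a.2.1 m, (E.expDivRoot_eq_ofMul_iff _ _).1 ha⟩

end PEField

/-- a partial E-field whose field contains primitive m-th roots of unity
for all m ≥ 1 has full kernel iff `ker(F)/m·ker(F)` is cyclic of order `m` for all
`m ≥ 1`. -/
theorem fullKernel_iff_kernel_quotients_cyclic
    {F : Type*} [Field F] [CharZero F] (E : PEField F)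
    (hroots : ∀ m : ℕ, 0 < m → ∃ ζ : F, IsPrimitiveRoot ζ m) :
    E.FullKernel ↔
      ∀ m : ℕ, 0 < m →
        IsAddCyclic (↥E.ker ⧸ (m • (⊤ : AddSubgroup ↥E.ker))) ∧
        Nat.card (↥E.ker ⧸ (m • (⊤ : AddSubgroup ↥E.ker))) = m := by
  rw [E.fullKernel_iff_forall_surjective_expDivRoot]
  refine forall₂_congr fun m hm => ?_
  have : NeZero m := ⟨hm.ne'⟩
  obtain ⟨ζ, hζ⟩ := hroots m hm
  have hcard : Nat.card (Additive (rootsOfUnity m F)) = m := hζ.card_rootsOfUnity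
  rw [← E.ker_expDivRoot hm.ne', ← AddMonoidHom.card_quotient_ker_eq_iff_surjective, hcard]
  exact ⟨fun h => ⟨(E.expDivRoot m).isAddCyclic_quotient_ker, h⟩, And.right⟩

end Paper
end
end

section
/- Let F be a partial E-field with full kernel whose kernel is a cyclic Z-module: there is τ ∈ ker(F) with ker(F) = Z(F)·τ, where Z(F) = {r ∈ F : r·x ∈ ker(F) for all x ∈ ker(F)} is the multiplicative stabilizer of the kernel. Suppose R is a subring of F such that for every m ≥ 1 the quotient R/mR of additive groups is cyclic of order m (i.e. the additive group of R is a model of Presburger arithmetic), and τ·R ∩ D(F) = ker(F). Let D' be the ℚ-linear span of (τ·R) ∪ D(F). Then there is a unique map exp' : D' → F∖{0} such that exp' extends exp_F, exp'(a+b) = exp'(a)·exp'(b) for all a,b ∈ D', and {a ∈ D' : exp'(a) = 1} = τ·R; moreover for this structure the multiplicative stabilizer {r ∈ F : r·(τ·R) ⊆ τ·R} equals R. -/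
noncomputable section
open scoped Pointwise
open Cardinal

namespace Paper

variable (F : Type*) [Field F] [CharZero F]

variable {F}

/-- If a quotient `R/mR` of a subring `R` of a field is additively cyclic, then `1`
generates it: every element of `R` is an integer plus `m` times an element of `R`. -/
private lemma one_generates {F : Type*} [Field F] [CharZero F] (R : Subring F)
    {m : ℕ} (hcyc : IsAddCyclic (↥R ⧸ (m • (⊤ : AddSubgroup ↥R)))) (r : ↥R) :
    ∃ (k : ℤ) (y : ↥R), (r : F) = (k : F) + (m : F) * (y : F) := by
  set S : AddSubgroup ↥R := m • (⊤ : AddSubgroup ↥R) with hS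
  obtain ⟨gq, hgq⟩ := IsAddCyclic.exists_generator (α := ↥R ⧸ S)
  obtain ⟨g, rfl⟩ := QuotientAddGroup.mk_surjective gq
  have key : ∀ x : ↥R, ∃ (n : ℤ) (y : ↥R),
      (x : F) = (n : F) * (g : F) + (m : F) * (y : F) := by
    intro x
    obtain ⟨n, hn⟩ := AddSubgroup.mem_zmultiples_iff.mp (hgq (QuotientAddGroup.mk x))
    have hnn : n • (g : ↥R ⧸ S) = QuotientAddGroup.mk (n • g) := rfl
    rw [hnn] at hn
    have hmem : x - n • g ∈ S := by
      rw [← QuotientAddGroup.eq_iff_sub_mem] at *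
      exact hn.symm
    rw [hS, AddSubgroup.mem_smul_pointwise_iff_exists] at hmem
    obtain ⟨y, -, hy⟩ := hmem
    refine ⟨n, y, ?_⟩
    have h := congrArg (fun z : ↥R => (z : F)) hy
    push_cast [zsmul_eq_mul, nsmul_eq_mul] at h
    linear_combination -h
  obtain ⟨n, a, h1⟩ := key 1
  obtain ⟨c, b, hg2⟩ := key (g * g)
  obtain ⟨nr, yr, hr⟩ := key r
  refine ⟨nr * c, (nr : ℤ) • ((n : ℤ) • b + g * a - (c : ℤ) • a) + yr, ?_⟩
  push_cast [zsmul_eq_mul, nsmul_eq_mul] at h1 hg2 hr ⊢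
  linear_combination hr + ((nr : F) * (g : F) - (nr : F) * (c : F)) * h1 +
    (nr : F) * (n : F) * hg2

/-- kernel extensions of a partial E-field whose kernel is a cyclic
`Z`-module `Z(F)·τ`. Given a subring `R` whose additive group is a model of Presburger
arithmetic with `τ·R ∩ D(F) = ker(F)`, there is a unique extension of `exp` to the span
of `τ·R ∪ D(F)` with kernel exactly `τ·R`; moreover the multiplicative stabilizer of
`τ·R` is exactly `R`. -/
theorem kernel_cyclic_module_extension_exists_unique
    {F : Type*} [Field F] [CharZero F] (E : PEField F)
    (hfull : E.FullKernel)
    (τ : F) (hτ : τ ∈ E.kerSet)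
    (hcyc : E.kerSet =
      {x : F | ∃ r : F, (∀ k ∈ E.kerSet, r * k ∈ E.kerSet) ∧ x = r * τ})
    (R : Subring F)
    (hR : ∀ m : ℕ, 0 < m →
      IsAddCyclic (↥R ⧸ (m • (⊤ : AddSubgroup ↥R))) ∧
      Nat.card (↥R ⧸ (m • (⊤ : AddSubgroup ↥R))) = m)
    (T : Set F) (hT : T = {x : F | ∃ u ∈ R, x = τ * u})
    (hTD : T ∩ (E.D : Set F) = E.kerSet) :
    (∃! e : ↥(Submodule.span ℚ (T ∪ (E.D : Set F))) → F,
      (∀ x, e x ≠ 0) ∧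
      (∀ x y, e (x + y) = e x * e y) ∧
      (∀ a : F, ∀ ha : a ∈ E.D,
        e ⟨a, Submodule.subset_span (Set.mem_union_right _ ha)⟩ = E.exp a) ∧
      (∀ x, e x = 1 ↔ (x : F) ∈ T)) ∧
    {r : F | ∀ x ∈ T, r * x ∈ T} = (R : Set F) := by
  -- Basic facts
  have hτD : τ ∈ E.D := hτ.1
  have hτT : τ ∈ T := by rw [hT]; exact ⟨1, R.one_mem, (mul_one τ).symm⟩
  have hT0 : (0 : F) ∈ T := by rw [hT]; exact ⟨0, R.zero_mem, (mul_zero τ).symm⟩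
  have hTadd : ∀ x ∈ T, ∀ y ∈ T, x + y ∈ T := by
    rw [hT]; rintro x ⟨u, hu, rfl⟩ y ⟨v, hv, rfl⟩
    exact ⟨u + v, R.add_mem hu hv, (mul_add τ u v).symm⟩
  have hTsub : ∀ x ∈ T, ∀ y ∈ T, x - y ∈ T := by
    rw [hT]; rintro x ⟨u, hu, rfl⟩ y ⟨v, hv, rfl⟩
    exact ⟨u - v, R.sub_mem hu hv, (mul_sub τ u v).symm⟩
  -- τ ≠ 0
  have hτ0 : τ ≠ 0 := by
    intro h0
    obtain ⟨a, haD, ha⟩ := hfull (-1) ⟨2, two_pos, by ring⟩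
    have h2a : a + a ∈ E.kerSet :=
      ⟨E.D.add_mem haD haD, by rw [E.exp_add a haD a haD, ha]; ring⟩
    rw [hcyc] at h2a
    obtain ⟨r, -, hra⟩ := h2a
    rw [h0, mul_zero] at hra
    rw [add_self_eq_zero.mp hra, E.exp_zero] at ha
    norm_num at ha
  -- kernel membership
  have hK : ∀ z, z ∈ T → z ∈ E.D → E.exp z = 1 := by
    intro z h1 h2
    have hz : z ∈ E.kerSet := by rw [← hTD]; exact ⟨h1, h2⟩
    exact hz.2
  -- decomposition of the span
  have hdecomp : ∀ x ∈ Submodule.span ℚ (T ∪ (E.D : Set F)),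
      ∃ t ∈ T, ∃ d ∈ E.D, x = t + d := by
    intro x hx
    induction hx using Submodule.span_induction with
    | mem x hx =>
      rcases hx with hx | hx
      · exact ⟨x, hx, 0, E.D.zero_mem, (add_zero x).symm⟩
      · exact ⟨0, hT0, x, hx, (zero_add x).symm⟩
    | zero => exact ⟨0, hT0, 0, E.D.zero_mem, (add_zero 0).symm⟩
    | add x y _ _ ihx ihy =>
      obtain ⟨t1, ht1, d1, hd1, rfl⟩ := ihx
      obtain ⟨t2, ht2, d2, hd2, rfl⟩ := ihy
      exact ⟨t1 + t2, hTadd _ ht1 _ ht2, d1 + d2, E.D.add_mem hd1 hd2, by ring⟩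
    | smul q x _ ih =>
      obtain ⟨t, ht, d, hd, rfl⟩ := ih
      rw [hT] at ht
      obtain ⟨u, hu, rfl⟩ := ht
      obtain ⟨k, y, hky⟩ :=
        one_generates R (hR q.den q.den_pos).1 ((q.num : ↥R) * ⟨u, hu⟩)
      refine ⟨τ * (y : F), by rw [hT]; exact ⟨y, y.2, rfl⟩,
        ((k / (q.den : ℚ) : ℚ)) • τ + q • d,
        E.D.add_mem (E.D.smul_mem _ hτD) (E.D.smul_mem _ hd), ?_⟩
      have hden : ((q.den : ℚ) : F) ≠ 0 := by
        push_cast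
        exact Nat.cast_ne_zero.mpr q.den_pos.ne'
      have hcast : ((k / (q.den : ℚ) : ℚ) : F) = (k : F) / ((q.den : ℕ) : F) := by
        push_cast; ring
      push_cast at hky
      rw [Rat.smul_def, Rat.smul_def, Rat.smul_def, hcast, Rat.cast_def]
      have hdF : ((q.den : ℕ) : F) ≠ 0 := Nat.cast_ne_zero.mpr q.den_pos.ne'
      field_simp
      linear_combination τ * hky
  -- well-definedness
  have hwd : ∀ t ∈ T, ∀ d ∈ E.D, ∀ t' ∈ T, ∀ d' ∈ E.D,
      t + d = t' + d' → E.exp d = E.exp d' := by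
    intro t ht d hd t' ht' d' hd' hEq
    have h1 : d - d' ∈ T := by
      have : d - d' = t' - t := by linear_combination hEq
      rw [this]; exact hTsub _ ht' _ ht
    have h2 : d - d' ∈ E.D := Submodule.sub_mem _ hd hd'
    have h3 : E.exp (d - d') = 1 := hK _ h1 h2
    have h4 := E.exp_add d' hd' (d - d') h2
    rw [show d' + (d - d') = d by ring, h3, mul_one] at h4
    exact h4
  set V := Submodule.span ℚ (T ∪ (E.D : Set F)) with hV
  have hdec : ∀ x : ↥V, ∃ p : F × F, p.1 ∈ T ∧ p.2 ∈ E.D ∧ (x : F) = p.1 + p.2 := by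
    intro x
    obtain ⟨t, ht, d, hd, h⟩ := hdecomp x x.2
    exact ⟨(t, d), ht, hd, h⟩
  set f : ↥V → F := fun x => E.exp (Classical.choose (hdec x)).2 with hf
  have hfval : ∀ (x : ↥V) (t d : F), t ∈ T → d ∈ E.D → (x : F) = t + d →
      f x = E.exp d := by
    intro x t d ht hd hx
    obtain ⟨h1, h2, h3⟩ := Classical.choose_spec (hdec x)
    exact hwd _ h1 _ h2 _ ht _ hd (by rw [← h3, ← hx])
  constructor
  · refine ⟨f, ⟨?_, ?_, ?_, ?_⟩, ?_⟩
    · -- nonvanishing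
      intro x
      obtain ⟨⟨t, d⟩, ht, hd, hx⟩ := hdec x
      rw [hfval x t d ht hd hx]
      exact E.exp_ne_zero d hd
    · -- additivity
      intro x y
      obtain ⟨⟨t1, d1⟩, ht1, hd1, hx⟩ := hdec x
      obtain ⟨⟨t2, d2⟩, ht2, hd2, hy⟩ := hdec y
      have hxy : ((x + y : ↥V) : F) = (t1 + t2) + (d1 + d2) := by
        push_cast
        rw [hx, hy]; ring
      rw [hfval x t1 d1 ht1 hd1 hx, hfval y t2 d2 ht2 hd2 hy,
        hfval (x + y) (t1 + t2) (d1 + d2) (hTadd _ ht1 _ ht2)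
          (E.D.add_mem hd1 hd2) hxy,
        E.exp_add d1 hd1 d2 hd2]
    · -- extends exp
      intro a ha
      exact hfval _ 0 a hT0 ha (zero_add a).symm
    · -- kernel is exactly T
      intro x
      obtain ⟨⟨t, d⟩, ht, hd, hx⟩ := hdec x
      constructor
      · intro h1
        rw [hfval x t d ht hd hx] at h1
        have hdT : d ∈ T := by
          have : d ∈ T ∩ (E.D : Set F) := by rw [hTD]; exact ⟨hd, h1⟩
          exact this.1
        rw [hx]
        exact hTadd _ ht _ hdT
      · intro h
        rw [hfval x (x : F) 0 h E.D.zero_mem (add_zero _).symm]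
        exact E.exp_zero
    · -- uniqueness
      rintro e' ⟨h1, h2, h3, h4⟩
      funext x
      obtain ⟨⟨t, d⟩, ht, hd, hx⟩ := hdec x
      have htV : t ∈ V := Submodule.subset_span (Set.mem_union_left _ ht)
      have hdV : d ∈ V := Submodule.subset_span (Set.mem_union_right _ hd)
      have hsum : x = (⟨t, htV⟩ : ↥V) + ⟨d, hdV⟩ := by
        apply Subtype.ext
        push_cast
        exact hx
      have he : e' x = E.exp d := by
        rw [hsum, h2, show e' ⟨t, htV⟩ = 1 from (h4 _).mpr ht, h3 d hd, one_mul]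
      rw [he, hfval x t d ht hd hx]
  · -- the stabilizer of T is R
    ext r
    simp only [Set.mem_setOf_eq, SetLike.mem_coe]
    constructor
    · intro h
      have hrτ := h τ hτT
      rw [hT] at hrτ
      obtain ⟨u, hu, huv⟩ := hrτ
      have : r = u := by
        apply mul_left_cancel₀ hτ0
        linear_combination huv
      rwa [this]
    · intro hr x hx
      rw [hT] at hx ⊢
      obtain ⟨u, hu, rfl⟩ := hx
      exact ⟨u * r, R.mul_mem hu hr, by ring⟩


end Paper
end
end

section
/- Let F be a partial E-field, let A be a partial E-subfield of F, and let x̄ be a finite tuple from F. Then Δ_F(x̄/A) = td(x̄ ∪ exp_F(x̄ ∩ D(F)) / A ∪ ker(F)) − mrk(exp_F(x̄ ∩ D(F)) / I(A)). -/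
noncomputable section
open scoped Pointwise
open Cardinal

namespace Paper

variable (F : Type*) [Field F] [CharZero F]

variable {F}

section Aux

variable {F : Type*} [Field F] [CharZero F] (E : PEField F)

/-- The unit of `F` given by `exp a` for `a ∈ D`. -/
def PEField.expUnit (a : E.D) : Fˣ := Units.mk0 (E.exp a) (E.exp_ne_zero a a.2)

/-- `exp` as an additive monoid hom `D → Additive Fˣ`. -/
def PEField.expHom : E.D →+ Additive Fˣ where
  toFun a := Additive.ofMul (E.expUnit a)
  map_zero' := by
    have : E.expUnit 0 = 1 := Units.ext (by simp [PEField.expUnit, E.exp_zero])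
    simp [this]
  map_add' a b := by
    have : E.expUnit (a + b) = E.expUnit a * E.expUnit b :=
      Units.ext (by simp [PEField.expUnit, E.exp_add a a.2 b b.2])
    simp [this]

/-- The `ℚ`-linear map `D → ℚ ⊗[ℤ] Additive Fˣ` induced by `exp`. -/
def PEField.psi : E.D →ₗ[ℚ] TensorProduct ℤ ℚ (Additive Fˣ) :=
  (((TensorProduct.mk ℤ ℚ (Additive Fˣ) 1).toAddMonoidHom).comp E.expHom).toRatLinearMap

lemma PEField.psi_apply (a : E.D) :
    E.psi a = toQV (E.expUnit a) := rfl

lemma PEField.mem_span_kerSet_of_psi_eq_zero {a : E.D} (h : E.psi a = 0) :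
    (a : F) ∈ Submodule.span ℚ E.kerSet := by
  haveI : IsLocalizedModule (nonZeroDivisors ℤ) (TensorProduct.mk ℤ ℚ (Additive Fˣ) 1) :=
    (isLocalizedModule_iff_isBaseChange (nonZeroDivisors ℤ) ℚ _).mpr
      (TensorProduct.isBaseChange ℤ (Additive Fˣ) ℚ)
  have h' : TensorProduct.mk ℤ ℚ (Additive Fˣ) 1 (E.expHom a) = 0 := h
  obtain ⟨n, hn⟩ := (IsLocalizedModule.eq_zero_iff (nonZeroDivisors ℤ) _).mp h'
  have hnz : (n : ℤ) ≠ 0 := nonZeroDivisors.coe_ne_zero n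
  have hexp : E.exp (((n : ℤ) • a : E.D) : F) = 1 := by
    have h1 : E.expHom ((n : ℤ) • a) = 0 := by
      rw [AddMonoidHom.map_zsmul]; exact hn
    have h2 : E.expUnit ((n : ℤ) • a) = 1 := by
      have := h1
      simpa [PEField.expHom, ← ofMul_one] using this
    have := congrArg (Units.val) h2
    simpa [PEField.expUnit] using this
  have hmem : (((n : ℤ) • a : E.D) : F) ∈ E.kerSet := ⟨((n : ℤ) • a).2, hexp⟩
  have hspan : (((n : ℤ) • a : E.D) : F) ∈ Submodule.span ℚ E.kerSet :=
    Submodule.subset_span hmem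
  have hcoe : (((n : ℤ) • a : E.D) : F) = ((n : ℤ) : ℚ) • (a : F) := by
    push_cast [Submodule.coe_smul]
    rw [Int.cast_smul_eq_zsmul]
  rw [hcoe] at hspan
  have hq : ((n : ℤ) : ℚ) ≠ 0 := by exact_mod_cast hnz
  have := Submodule.smul_mem (Submodule.span ℚ E.kerSet) (((n : ℤ) : ℚ))⁻¹ hspan
  rwa [inv_smul_smul₀ hq] at this

lemma toQV_image_unitsOf {Y : Set F} (hY : Y ⊆ (E.D : Set F))
    (Ψ : F →ₗ[ℚ] TensorProduct ℤ ℚ (Additive Fˣ))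
    (hΨ : Ψ.comp E.D.subtype = E.psi) :
    toQV '' unitsOf (E.exp '' Y) = Ψ '' Y := by
  have hΨ' : ∀ a : E.D, Ψ (a : F) = E.psi a := fun a => LinearMap.congr_fun hΨ a
  ext v
  constructor
  · rintro ⟨u, hu, rfl⟩
    obtain ⟨a, haY, hau⟩ := hu
    have haD : a ∈ E.D := hY haY
    have : E.expUnit ⟨a, haD⟩ = u := Units.ext (by simpa [PEField.expUnit] using hau)
    refine ⟨a, haY, ?_⟩
    rw [hΨ' ⟨a, haD⟩, PEField.psi_apply, this]
  · rintro ⟨a, haY, rfl⟩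
    have haD : a ∈ E.D := hY haY
    refine ⟨E.expUnit ⟨a, haD⟩, ⟨a, haY, rfl⟩, ?_⟩
    rw [hΨ' ⟨a, haD⟩, PEField.psi_apply]

/-- Key lemma: the relative linear dimension equals the multiplicative rank. -/
lemma ldimN_eq_mrk (A : ESub E) (s : Finset F) :
    ldimN F ((A.dom : Set F) ∪ E.kerSet) (↑s ∩ (E.D : Set F)) =
      mrk (unitsOf (E.exp '' (A.dom : Set F)))
        (unitsOf (E.exp '' (↑s ∩ (E.D : Set F)))) := by
  classical
  obtain ⟨Ψ, hΨ⟩ := LinearMap.exists_extend E.psi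
  have hΨ' : ∀ a : E.D, Ψ (a : F) = E.psi a := fun a => LinearMap.congr_fun hΨ a
  set X : Set F := ↑s ∩ (E.D : Set F) with hX
  have hXD : X ⊆ (E.D : Set F) := Set.inter_subset_right
  have hAD : (A.dom : Set F) ⊆ (E.D : Set F) := A.dom_le
  have hkD : E.kerSet ⊆ (E.D : Set F) := fun a ha => ha.1
  set N₁ : Submodule ℚ F := Submodule.span ℚ ((A.dom : Set F) ∪ E.kerSet) with hN₁
  set N₂ : Submodule ℚ (TensorProduct ℤ ℚ (Additive Fˣ)) :=
    Submodule.span ℚ (toQV '' unitsOf (E.exp '' (A.dom : Set F))) with hN₂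
  have hN₁D : N₁ ≤ E.D := Submodule.span_le.mpr (Set.union_subset hAD hkD)
  -- Ψ kills the kernel set
  have hker0 : ∀ a ∈ E.kerSet, Ψ a = 0 := by
    intro a ha
    have h1 : E.expUnit ⟨a, ha.1⟩ = 1 := Units.ext (by simpa [PEField.expUnit] using ha.2)
    rw [hΨ' ⟨a, ha.1⟩, PEField.psi_apply, h1]
    simp [toQV]
  -- N₂ is the image of N₁ under Ψ
  have hmap : Submodule.map Ψ N₁ = N₂ := by
    rw [hN₁, Submodule.map_span, Set.image_union, Submodule.span_union]
    have h0 : Submodule.span ℚ (Ψ '' E.kerSet) = ⊥ := by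
      rw [Submodule.span_eq_bot]
      rintro x ⟨a, ha, rfl⟩
      exact hker0 a ha
    rw [h0, sup_bot_eq, hN₂, toQV_image_unitsOf E hAD Ψ hΨ]
  have hle : N₁ ≤ LinearMap.ker (N₂.mkQ.comp Ψ) := by
    intro x hx
    have : Ψ x ∈ N₂ := hmap ▸ Submodule.mem_map_of_mem hx
    simpa [LinearMap.mem_ker, Submodule.Quotient.mk_eq_zero] using
      (Submodule.Quotient.mk_eq_zero N₂).mpr this
  set Φ : (F ⧸ N₁) →ₗ[ℚ] (TensorProduct ℤ ℚ (Additive Fˣ) ⧸ N₂) :=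
    N₁.liftQ (N₂.mkQ.comp Ψ) hle with hΦ
  have hΦ_apply : ∀ x : F, Φ (N₁.mkQ x) = N₂.mkQ (Ψ x) := fun x => rfl
  set W₁ : Submodule ℚ (F ⧸ N₁) := Submodule.span ℚ (N₁.mkQ '' X) with hW₁
  -- W₂ is the image of W₁ under Φ
  have himg : Submodule.span ℚ (N₂.mkQ '' (toQV '' unitsOf (E.exp '' X)))
      = Submodule.map Φ W₁ := by
    rw [toQV_image_unitsOf E hXD Ψ hΨ, hW₁, Submodule.map_span, ← Set.image_comp,
      ← Set.image_comp]
    congr 1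
  -- Φ is injective on W₁
  have hW₁' : W₁ = Submodule.map N₁.mkQ (Submodule.span ℚ X) := by
    rw [hW₁, Submodule.map_span]
  have hinj : ∀ w ∈ W₁, Φ w = 0 → w = 0 := by
    intro w hw hw0
    rw [hW₁'] at hw
    obtain ⟨x, hx, rfl⟩ := hw
    rw [hΦ_apply, Submodule.mkQ_apply, Submodule.Quotient.mk_eq_zero] at hw0
    -- Ψ x ∈ N₂ = map Ψ N₁
    rw [← hmap] at hw0
    obtain ⟨y, hy, hyx⟩ := hw0
    have hxD : x ∈ E.D := (Submodule.span_le.mpr hXD) hx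
    have hyD : y ∈ E.D := hN₁D hy
    have hz : Ψ (x - y) = 0 := by rw [map_sub, hyx, sub_self]
    have hzD : x - y ∈ E.D := E.D.sub_mem hxD hyD
    have hpsi : E.psi ⟨x - y, hzD⟩ = 0 := by rw [← hΨ' ⟨x - y, hzD⟩]; exact hz
    have hspan : x - y ∈ Submodule.span ℚ E.kerSet :=
      E.mem_span_kerSet_of_psi_eq_zero hpsi
    have hsub : Submodule.span ℚ E.kerSet ≤ N₁ :=
      Submodule.span_mono Set.subset_union_right
    have hxN : x ∈ N₁ := by
      have := N₁.add_mem (hsub hspan) hy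
      simpa using this
    rw [Submodule.mkQ_apply, Submodule.Quotient.mk_eq_zero]
    exact hxN
  -- ranks agree
  have hrank : Module.rank ℚ W₁ = Module.rank ℚ (Submodule.map Φ W₁) := by
    have hker : LinearMap.ker (Φ.comp W₁.subtype) = ⊥ := by
      rw [LinearMap.ker_eq_bot']
      intro m hm
      have := hinj m.1 m.2 hm
      exact Subtype.ext this
    have hrange : LinearMap.range (Φ.comp W₁.subtype) = Submodule.map Φ W₁ := by
      rw [LinearMap.range_comp, Submodule.range_subtype]
    have := (LinearEquiv.ofInjective (Φ.comp W₁.subtype)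
      (LinearMap.ker_eq_bot.mp hker)).rank_eq
    rwa [hrange] at this
  -- conclude
  unfold ldimN ldim mrk
  rw [← hN₁, ← hN₂, ← hW₁, himg, hrank]

end Aux

/-- `Δ_F(x̄/A) = td(x̄ ∪ exp(x̄ ∩ D(F)) / A ∪ ker(F)) −
mrk(exp(x̄ ∩ D(F)) / I(A))` for a partial E-subfield `A` of `F`. -/
theorem delta_eq_td_sub_mrk
    {F : Type*} [Field F] [CharZero F] (E : PEField F) (A : ESub E) (s : Finset F) :
    Delta E A E.top s =
      (tdN F ((A.carrier : Set F) ∪ E.kerSet)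
        (↑s ∪ E.exp '' (↑s ∩ (E.D : Set F))) : ℤ) -
      (mrk (unitsOf (E.exp '' (A.dom : Set F)))
        (unitsOf (E.exp '' (↑s ∩ (E.D : Set F)))) : ℤ) := by
  have h1 : (PEField.top E).kerSet = E.kerSet := rfl
  have h2 : ((PEField.top E).dom : Set F) = (E.D : Set F) := rfl
  unfold Delta
  rw [h1, h2, ldimN_eq_mrk]

end Paper
end
end

section
/- Let F be a partial E-field, let A be any subset of F, and let x̄ and ȳ be finite tuples from F. Then the predimension function satisfies the addition property: Δ_F(x̄ ∪ ȳ / A) = Δ_F(x̄ / A ∪ ȳ) + Δ_F(ȳ / A). -/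
noncomputable section
open scoped Pointwise
open Cardinal

/-!
Both terms of the predimension are ranks in contractions of matroids: `td(Y/X)` is the rank of
`Y` in the algebraic matroid of `F` over `ℚ` contracted by `X`, and `ldim_ℚ(Y/X)` is the rank of
the image of `Y` in `F ⧸ span X`. Each is therefore additive along towers,
`r(Y ∪ Z / X) = r(Y / X ∪ Z) + r(Z / X)`. Applied with `X = ⟨ker ∪ A⟩` and `Z = ȳ ∪ exp(ȳ)`,
the only discrepancy is that the base field `⟨ker ∪ A ∪ ȳ⟩` of `Δ(x̄ / A ∪ ȳ)` is larger than
`⟨ker ∪ A⟩ ∪ ȳ ∪ exp(ȳ)`; but it is algebraic over it, because `exp` of a `ℚ`-linear combination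
is a root of a product of powers of the exponentials of its terms. On the linear side there is no
discrepancy: `D(⟨ker ∪ A ∪ ȳ⟩)` is spanned by `D(⟨ker ∪ A⟩)` and `ȳ ∩ D`.
-/

open Set

namespace Matroid

variable {α : Type*} {M : Matroid α} {X X' D : Set α}

theorem cRk_union_eq_cRk_contract_add (M : Matroid α) [M.Finitary] (Y Z : Set α) :
    M.cRk (Y ∪ Z) = (M ／ Z).cRk Y + M.cRk Z := by
  obtain ⟨I, hI⟩ := M.exists_isBasis' Z
  obtain ⟨K, hK, hIK⟩ := hI.indep.subset_isBasis'_of_subset (hI.subset.trans subset_union_right)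
  have hKZ : K ∩ Z = I := (hI.eq_of_subset_indep (hK.indep.subset inter_subset_left)
    (subset_inter hIK hI.subset) inter_subset_right).symm
  have hcontract : (M ／ Z).IsBasis' (K \ Z) ((Y ∪ Z) \ Z) :=
    hK.contract_isBasis' hI (hK.indep.subset (union_subset sdiff_subset hIK))
  have hY : (M ／ Z).cRk ((Y ∪ Z) \ Z) = (M ／ Z).cRk Y := by
    rw [← cRk_inter_ground, eq_comm, ← cRk_inter_ground, contract_ground]
    congr 1
    ext
    simp only [mem_inter_iff, mem_sdiff, mem_union]
    tauto
  rw [← hK.cardinalMk_eq_cRk, ← hI.cardinalMk_eq_cRk, ← hY, ← hcontract.cardinalMk_eq_cRk, ← hKZ,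
    ← Cardinal.mk_union_of_disjoint disjoint_sdiff_inter, sdiff_union_inter]

theorem cRk_delete_of_subset_loops [M.InvariantCardinalRank] (hD : D ⊆ M.loops) (Y : Set α) :
    (M ＼ D).cRk Y = M.cRk Y := by
  rw [delete_eq_restrict, cRk_restrict]
  refine cRk_closure_congr (subset_antisymm (M.closure_subset_closure inter_subset_right) ?_)
  rw [← closure_inter_ground, ← closure_sdiff_loops_eq]
  exact M.closure_subset_closure fun e he ↦ ⟨⟨he.1.2, fun heD ↦ he.2 (hD heD)⟩, he.1.1⟩

theorem cRk_contract_of_subset_closure [M.Finitary] (hXX' : X ⊆ X') (hX' : X' ⊆ M.closure X)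
    (Y : Set α) : (M ／ X').cRk Y = (M ／ X).cRk Y := by
  have hloops : X' \ X ⊆ (M ／ X).loops := by
    rw [contract_loops_eq]
    exact sdiff_subset_sdiff_left hX'
  rw [← union_sdiff_cancel hXX', ← contract_contract, contract_eq_delete_of_subset_loops hloops,
    cRk_delete_of_subset_loops hloops]

end Matroid

namespace Submodule

variable {K V : Type*} [DivisionRing K] [AddCommGroup V] [Module K V]

theorem rank_map_mkQ_eq_add {U R P : Submodule K V} (hUR : U ≤ R) (hRP : R ≤ P) :
    Module.rank K (P.map U.mkQ) = Module.rank K (P.map R.mkQ) + Module.rank K (R.map U.mkQ) := by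
  let f := U.mapQ R LinearMap.id hUR ∘ₗ (P.map U.mkQ).subtype
  have hrange : LinearMap.range f = P.map R.mkQ := by
    rw [LinearMap.range_comp, range_subtype, ← map_comp, mapQ_mkQ, LinearMap.comp_id]
  have hker : LinearMap.ker f = (R.map U.mkQ).comap (P.map U.mkQ).subtype := by
    rw [LinearMap.ker_comp, ker_mapQ, comap_id]
  rw [← LinearMap.rank_range_add_rank_ker f, hrange, hker,
    (comapSubtypeEquivOfLe (map_mono hRP)).rank_eq]

end Submodule

section AlgebraicMatroid

open Matroid AlgebraicIndependent

variable {k L : Type*} [Field k] [Field L] [Algebra k L]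

theorem algebraicIndepOn_union_iff {J B : Set L} (hJB : Disjoint J B) :
    AlgebraicIndepOn k id (J ∪ B) ↔
      AlgebraicIndepOn k id B ∧ AlgebraicIndependent (Algebra.adjoin k B) ((↑) : J → L) := by
  classical
  have he : ((↑) : ↥(J ∪ B) → L) ∘ (Equiv.Set.union hJB).symm = Sum.elim (↑) (↑) := by
    ext (x | x) <;> simp [Equiv.Set.union_symm_apply_left, Equiv.Set.union_symm_apply_right]
  refine (algebraicIndependent_equiv' _ he).symm.trans ?_
  rw [sumElim_iff, Subtype.range_coe]
  rfl

theorem AlgebraicIndependent.adjoin_iff_matroid_contract_indep {X J : Set L} :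
    AlgebraicIndependent (IntermediateField.adjoin k X) ((↑) : J → L) ↔
      (matroid k L ／ X).Indep J := by
  obtain ⟨B, hB⟩ := (matroid k L).exists_isBasis X (subset_univ X)
  obtain ⟨hBind, hBX, hXalg⟩ := matroid_isBasis_iff.1 hB
  have hbase : AlgebraicIndependent (IntermediateField.adjoin k X) ((↑) : J → L) ↔
      AlgebraicIndependent (Algebra.adjoin k B) ((↑) : J → L) := by
    rw [IntermediateField.algebraicIndependent_adjoin_iff]
    let : Algebra (Algebra.adjoin k B) (Algebra.adjoin k X) :=
      (Subalgebra.inclusion (Algebra.adjoin_mono hBX)).toAlgebra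
    have : IsScalarTower (Algebra.adjoin k B) (Algebra.adjoin k X) L :=
      .of_algebraMap_eq fun _ ↦ rfl
    have : FaithfulSMul (Algebra.adjoin k B) (Algebra.adjoin k X) :=
      (faithfulSMul_iff_algebraMap_injective _ _).2 (Subalgebra.inclusion_injective _)
    have : Algebra.IsAlgebraic (Algebra.adjoin k B) (Algebra.adjoin k X) := ⟨fun y ↦ by
      rw [← isAlgebraic_algHom_iff (IsScalarTower.toAlgHom _ _ L) Subtype.val_injective]
      exact (isAlgebraic_adjoin_iff_of_matroid_isBasis hB).2
        (isAlgebraic_algebraMap (⟨y, y.2⟩ : Algebra.adjoin k X))⟩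
    exact (Algebra.IsAlgebraic.algebraicIndependent_iff _ _).symm
  rw [hbase, hB.contract_indep_iff, matroid_indep_iff]
  constructor
  · intro h
    have hXJ : Disjoint X J := disjoint_left.2 fun j hjX hjJ ↦
      h.transcendental ⟨j, hjJ⟩ (hXalg j hjX)
    exact ⟨(algebraicIndepOn_union_iff (hXJ.symm.mono_right hBX)).2 ⟨hBind, h⟩, hXJ⟩
  · rintro ⟨h, hXJ⟩
    exact ((algebraicIndepOn_union_iff (hXJ.symm.mono_right hBX)).1 h).2

theorem AlgebraicIndependent.matroid_closure_eq_algebraicClosure (S : Set L) :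
    (matroid k L).closure S = (algebraicClosure (IntermediateField.adjoin k S) L : Set L) := by
  ext a
  rw [matroid_closure_eq, SetLike.mem_coe, SetLike.mem_coe, Subalgebra.mem_algebraicClosure,
    mem_algebraicClosure_iff, IntermediateField.isAlgebraic_adjoin_iff]

end AlgebraicMatroid

namespace Paper

open Matroid AlgebraicIndependent Submodule

variable {F : Type*} [Field F] [CharZero F]

theorem td_eq_cRk_contract (X Y : Set F) : td F X Y = (matroid ℚ F ／ X).cRk Y := by
  have h : (fun J : Set F ↦ J ⊆ Y ∧
      AlgebraicIndependent (IntermediateField.adjoin ℚ X) ((↑) : J → F)) =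
        ((matroid ℚ F ／ X) ↾ Y).Indep := by
    ext J
    rw [restrict_indep_iff, adjoin_iff_matroid_contract_indep, and_comm]
  rw [cRk, cRank_eq_iSup_cardinalMk_indep, ← h]
  rfl

theorem td_lt_aleph0 (X : Set F) {Y : Set F} (hY : Y.Finite) : td F X Y < Cardinal.aleph0 := by
  rw [td_eq_cRk_contract]
  exact (cRk_le_cardinalMk _ _).trans_lt hY.lt_aleph0

theorem tdN_union (X : Set F) {Y Z : Set F} (hY : Y.Finite) (hZ : Z.Finite) :
    tdN F X (Y ∪ Z) = tdN F (X ∪ Z) Y + tdN F X Z := by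
  have h := td_eq_cRk_contract X (Y ∪ Z)
  rw [cRk_union_eq_cRk_contract_add, contract_contract, ← td_eq_cRk_contract,
    ← td_eq_cRk_contract] at h
  rw [tdN, tdN, tdN, h, Cardinal.toNat_add (td_lt_aleph0 _ hY) (td_lt_aleph0 _ hZ)]

theorem tdN_eq_of_subset_closure {X X' : Set F} (hXX' : X ⊆ X')
    (hX' : X' ⊆ (matroid ℚ F).closure X) (Y : Set F) : tdN F X' Y = tdN F X Y := by
  rw [tdN, tdN, td_eq_cRk_contract, td_eq_cRk_contract, cRk_contract_of_subset_closure hXX' hX']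

theorem ldim_eq_rank_map_mkQ (X Y : Set F) :
    ldim F X Y = Module.rank ℚ ((span ℚ (X ∪ Y)).map (span ℚ X).mkQ) := by
  rw [ldim, ← map_span, span_union, Submodule.map_sup, mkQ_map_self, bot_sup_eq]

theorem ldim_lt_aleph0 (X : Set F) {Y : Set F} (hY : Y.Finite) : ldim F X Y < Cardinal.aleph0 :=
  (rank_span_le _).trans_lt (hY.image _).lt_aleph0

theorem ldimN_union (X : Set F) {Y Z : Set F} (hY : Y.Finite) (hZ : Z.Finite) :
    ldimN F X (Y ∪ Z) = ldimN F (X ∪ Z) Y + ldimN F X Z := by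
  have h : ldim F X (Y ∪ Z) = ldim F (X ∪ Z) Y + ldim F X Z := by
    rw [ldim_eq_rank_map_mkQ, ldim_eq_rank_map_mkQ, ldim_eq_rank_map_mkQ,
      show X ∪ (Y ∪ Z) = X ∪ Z ∪ Y by rw [union_right_comm, union_assoc]]
    exact rank_map_mkQ_eq_add (span_mono subset_union_left) (span_mono subset_union_left)
  rw [ldimN, ldimN, ldimN, h, Cardinal.toNat_add (ldim_lt_aleph0 _ hY) (ldim_lt_aleph0 _ hZ)]

theorem ldimN_span_left (X Y : Set F) : ldimN F (span ℚ X) Y = ldimN F X Y := by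
  rw [ldimN, ldimN, ldim, ldim, span_eq]

namespace PEField

variable (E : PEField F)

def expHom_s8 : E.D →+ Additive Fˣ where
  toFun a := .ofMul (Units.mk0 (E.exp a) (E.exp_ne_zero a a.2))
  map_zero' := by ext; exact E.exp_zero
  map_add' a b := by ext; exact E.exp_add a a.2 b b.2

theorem exp_zsmul {a : F} (ha : a ∈ E.D) (z : ℤ) : E.exp (z • a) = E.exp a ^ z := by
  have h := congrArg (fun u ↦ ((u.toMul : Fˣ) : F)) (map_zsmul E.expHom_s8 z ⟨a, ha⟩)
  simpa [expHom_s8] using h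

theorem exp_mem_of_mem_span {K : Subfield F} (hK : ∀ a : F, ∀ n : ℕ, 0 < n → a ^ n ∈ K → a ∈ K)
    {S : Set F} (hSD : S ⊆ E.D) (hS : ∀ x ∈ S, E.exp x ∈ K) {w : F} (hw : w ∈ span ℚ S) :
    E.exp w ∈ K := by
  have hD : span ℚ S ≤ E.D := span_le.2 hSD
  induction hw using span_induction with
  | mem x hx => exact hS x hx
  | zero => rw [E.exp_zero]; exact K.one_mem
  | add x y hx hy hxK hyK =>
    rw [E.exp_add x (hD hx) y (hD hy)]
    exact K.mul_mem hxK hyK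
  | smul q x hx hxK =>
    -- `exp (q • x)` is a `den q`-th root of `exp x ^ num q`
    have hq : ((q.den : ℤ) • (q • x)) = q.num • x := by
      rw [← Int.cast_smul_eq_zsmul ℚ, ← Int.cast_smul_eq_zsmul ℚ, smul_smul]
      push_cast
      rw [mul_comm, Rat.mul_den_eq_num]
    have h := congrArg E.exp hq
    rw [E.exp_zsmul (E.D.smul_mem q (hD hx)), E.exp_zsmul (hD hx), zpow_natCast] at h
    exact hK _ q.den q.den_pos (h ▸ K.zpow_mem hxK q.num)

def withExp (S : Set F) : Set F := S ∪ E.exp '' (S ∩ E.D)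

theorem withExp_union (S T : Set F) : E.withExp (S ∪ T) = E.withExp S ∪ E.withExp T := by
  simp only [withExp, union_inter_distrib_right, image_union]
  exact union_union_union_comm ..

theorem withExp_finite {S : Set F} (hS : S.Finite) : (E.withExp S).Finite :=
  hS.union ((hS.inter_of_left _).image _)

end PEField

section GenSub

variable (E : PEField F)

theorem subset_genSub_carrier (X : Set F) : X ⊆ (genSub E X).carrier :=
  fun _ hx ↦ Subfield.subset_closure (Or.inl hx)

theorem exp_mem_genSub_carrier {X : Set F} {x : F} (hx : x ∈ span ℚ (X ∩ E.D)) :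
    E.exp x ∈ (genSub E X).carrier :=
  Subfield.subset_closure (Or.inr ⟨x, hx, rfl⟩)

theorem genSub_carrier_mono {X Y : Set F} (h : X ⊆ Y) :
    ((genSub E X).carrier : Set F) ⊆ (genSub E Y).carrier :=
  Subfield.closure_mono
    (union_subset_union h (image_mono (span_mono (inter_subset_inter_left _ h))))

theorem genSub_carrier_union_withExp_subset (X T : Set F) :
    ((genSub E X).carrier : Set F) ∪ E.withExp T ⊆ (genSub E (X ∪ T)).carrier := by
  refine union_subset (genSub_carrier_mono E subset_union_left) (union_subset
    ((subset_genSub_carrier E _).trans' subset_union_right) ?_)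
  rintro _ ⟨x, hx, rfl⟩
  exact exp_mem_genSub_carrier E (subset_span ⟨Or.inr hx.1, hx.2⟩)

theorem genSub_carrier_union_subset_closure (X T : Set F) :
    ((genSub E (X ∪ T)).carrier : Set F) ⊆
      (matroid ℚ F).closure ((genSub E X).carrier ∪ E.withExp T) := by
  set B := ((genSub E X).carrier : Set F) ∪ E.withExp T
  let K := (algebraicClosure (IntermediateField.adjoin ℚ B) F).toSubfield
  have hmem (a : F) : a ∈ K ↔ IsAlgebraic (IntermediateField.adjoin ℚ B) a :=
    mem_algebraicClosure_iff
  have hBK : B ⊆ K := fun b hb ↦ (hmem b).2 (isAlgebraic_algebraMap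
    (⟨b, IntermediateField.subset_adjoin ℚ B hb⟩ : IntermediateField.adjoin ℚ B))
  have hKrad (a : F) (n : ℕ) (hn : 0 < n) (ha : a ^ n ∈ K) : a ∈ K :=
    (hmem a).2 (((hmem _).1 ha).of_pow hn)
  rw [matroid_closure_eq_algebraicClosure (k := ℚ)]
  refine (Subfield.closure_le (t := K)).2 (union_subset ?_ ?_)
  · rintro x (hx | hx)
    · exact hBK (Or.inl (subset_genSub_carrier E X hx))
    · exact hBK (Or.inr (Or.inl hx))
  · rintro _ ⟨w, hw, rfl⟩
    refine E.exp_mem_of_mem_span hKrad inter_subset_right ?_ hw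
    rintro x ⟨hx | hx, hxD⟩
    · exact hBK (Or.inl (exp_mem_genSub_carrier E (subset_span ⟨hx, hxD⟩)))
    · exact hBK (Or.inr (Or.inr ⟨x, ⟨hx, hxD⟩, rfl⟩))

theorem genSub_dom_union (X T : Set F) :
    span ℚ (((genSub E X).dom : Set F) ∪ (T ∩ E.D)) = (genSub E (X ∪ T)).dom := by
  simp only [genSub, span_union, span_eq, union_inter_distrib_right]

theorem tdN_genSub_union (X : Set F) {S T : Set F} (hS : S.Finite) (hT : T.Finite) :
    tdN F (genSub E X).carrier (E.withExp (S ∪ T)) =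
      tdN F (genSub E (X ∪ T)).carrier (E.withExp S) +
        tdN F (genSub E X).carrier (E.withExp T) := by
  rw [E.withExp_union, tdN_union _ (E.withExp_finite hS) (E.withExp_finite hT),
    tdN_eq_of_subset_closure (genSub_carrier_union_withExp_subset E X T)
      (genSub_carrier_union_subset_closure E X T)]

theorem ldimN_genSub_union (X : Set F) {S T : Set F} (hS : S.Finite) (hT : T.Finite) :
    ldimN F (genSub E X).dom ((S ∪ T) ∩ E.D) =
      ldimN F (genSub E (X ∪ T)).dom (S ∩ E.D) + ldimN F (genSub E X).dom (T ∩ E.D) := by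
  rw [union_inter_distrib_right, ldimN_union _ (hS.inter_of_left _) (hT.inter_of_left _),
    ← genSub_dom_union, ldimN_span_left]

theorem deltaOver_eq (B : Set F) (s : Finset F) :
    DeltaOver E B s = (tdN F (genSub E (E.kerSet ∪ B)).carrier (E.withExp s) : ℤ) -
      ldimN F (genSub E (E.kerSet ∪ B)).dom (s ∩ E.D) := by
  have hker : E.kerSet ⊆ (genSub E (E.kerSet ∪ B)).dom :=
    fun a ha ↦ subset_span ⟨Or.inl ha, ha.1⟩
  rw [DeltaOver, Delta, show E.top.kerSet = E.kerSet from rfl,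
    union_eq_left.2 ((subset_genSub_carrier E _).trans' subset_union_left), union_eq_left.2 hker]
  rfl

end GenSub

/-- the addition property of the predimension function:
`Δ_F(x̄ ∪ ȳ / A) = Δ_F(x̄ / A ∪ ȳ) + Δ_F(ȳ / A)`. -/
theorem delta_addition
    {F : Type*} [Field F] [CharZero F] [DecidableEq F] (E : PEField F)
    (A : Set F) (s t : Finset F) :
    DeltaOver E A (s ∪ t) = DeltaOver E (A ∪ ↑t) s + DeltaOver E A t := by
  rw [deltaOver_eq, deltaOver_eq, deltaOver_eq, Finset.coe_union, ← union_assoc,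
    tdN_genSub_union E _ s.finite_toSet t.finite_toSet,
    ldimN_genSub_union E _ s.finite_toSet t.finite_toSet]
  push_cast
  ring

end Paper
end
end
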